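/- Let N=(V,E,s,t) be an acyclic unit-capacity point-to-point network and let e be an edge lying on some directed s-t path. Then e belongs to no capacity factor of N (i.e., e is in the H-set) if and only if for every s-t path p containing e, C_{N\p}(s,t) ≤ C_N(s,t) − 2. -/

import Mathlib

/-- A point-to-point network: a finite directed multigraph with edge set
`edges`, endpoint maps `tail`/`head`, source `s` and sink `t`; every edge has
unit capacity. -/
structure Network (V : Type) (ε : Type) where
  edges : Finset ε
  tail : ε → V
  head : ε → V
  s : V
  t : V

namespace Network

variable {V ε : Type} [DecidableEq ε]

/-- `p` is a nonempty directed walk from `u` to `v` using edges of `N`. -/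
def IsWalk (N : Network V ε) (u v : V) (p : List ε) : Prop :=
  p ≠ [] ∧ (∀ e ∈ p, e ∈ N.edges) ∧
  (∀ i, ∀ h : i + 1 < p.length,
    N.head (p.get ⟨i, Nat.lt_of_succ_lt h⟩) = N.tail (p.get ⟨i + 1, h⟩)) ∧
  (∀ h : 0 < p.length, N.tail (p.get ⟨0, h⟩) = u) ∧
  (∀ h : 0 < p.length, N.head (p.get ⟨p.length - 1, Nat.sub_lt h Nat.one_pos⟩) = v)

/-- An `s`-`t` path: an edge-simple walk from the source to the sink. -/
def IsPath (N : Network V ε) (p : List ε) : Prop :=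
  N.IsWalk N.s N.t p ∧ p.Nodup

/-- `v` is reachable from `u` by a directed walk (or `u = v`). -/
def Reach (N : Network V ε) (u v : V) : Prop :=
  u = v ∨ ∃ p, N.IsWalk u v p

/-- Reachability within the subgraph induced by the vertex set `S`. -/
def ReachIn (N : Network V ε) (S : Set V) (u v : V) : Prop :=
  u = v ∨ ∃ p, N.IsWalk u v p ∧ ∀ e ∈ p, N.tail e ∈ S ∧ N.head e ∈ S

/-- An edge-simple directed cycle. -/
def IsCycle (N : Network V ε) (p : List ε) : Prop :=
  ∃ u, N.IsWalk u u p ∧ p.Nodup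

def Acyclic (N : Network V ε) : Prop := ∀ p, ¬ N.IsCycle p

/-- A collection of pairwise edge-disjoint `s`-`t` paths (an integral flow in a
unit-capacity network). -/
def IsFlowList (N : Network V ε) (fs : List (List ε)) : Prop :=
  (∀ p ∈ fs, N.IsPath p) ∧ fs.Pairwise fun p q => ∀ e ∈ p, e ∉ q

def HasFlow (N : Network V ε) (n : ℕ) : Prop :=
  ∃ fs, N.IsFlowList fs ∧ fs.length = n

/-- The maximum-flow value `C_N(s,t)`: the maximum number of pairwise
edge-disjoint directed `s`-`t` paths. -/
noncomputable def maxFlow (N : Network V ε) : ℕ :=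
  sSup {n | N.HasFlow n}

/-- Delete the edges of `F` from the network. -/
def del (N : Network V ε) (F : Finset ε) : Network V ε :=
  { N with edges := N.edges \ F }

/-- `F` is a `k`-th order capacity factor of `N`:
`C_{N\F} ≤ C_N − k`, and `C_{N\F'} > C_N − k` for every proper `F' ⊊ F`. -/
def IsKCF (N : Network V ε) (k : ℕ) (F : Finset ε) : Prop :=
  F.Nonempty ∧ F ⊆ N.edges ∧ (N.del F).maxFlow + k ≤ N.maxFlow ∧
    ∀ F' ⊂ F, N.maxFlow < (N.del F').maxFlow + k

/-- `F` is a capacity factor of `N`: deleting `F` decreases the maximum flow,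
while deleting any proper subset does not. -/
def IsCF (N : Network V ε) (F : Finset ε) : Prop :=
  F.Nonempty ∧ F ⊆ N.edges ∧ (N.del F).maxFlow < N.maxFlow ∧
    ∀ F' ⊂ F, (N.del F').maxFlow = N.maxFlow

/-- The set of edges used by a flow given as a list of paths. -/
def usedEdges (fs : List (List ε)) : Finset ε := fs.flatten.toFinset

/-- Residual network w.r.t. a set of used (unit-capacity) edges: used edges
are reversed, unused edges keep their direction. -/
def residual (N : Network V ε) (used : Finset ε) : Network V ε :=
  { edges := N.edges,
    tail := fun e => if e ∈ used then N.head e else N.tail e,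
    head := fun e => if e ∈ used then N.tail e else N.head e,
    s := N.s, t := N.t }

/-- The same network with sink replaced by `v`. -/
def withSink (N : Network V ε) (v : V) : Network V ε := { N with t := v }

end Network

open Network

/-!
If `p` is an `s`-`t` path through `e` with `C(N \ p) = C(N) - 1`, then `p` together with a
maximum flow of `N \ p` is a maximum flow `f` of `N` through `e`. Deleting the edges that `f`
does not use keeps the flow value, but deleting them together with `e` lowers it: a maximum flow
avoiding all of them would use a proper subset of the edges of `f`, and the difference of the two
flows would be a nonzero circulation, which an acyclic network does not carry. A minimal subset of
these edges containing `e` whose deletion lowers the flow is then a capacity factor through `e`.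

Conversely, if `e` lies in a capacity factor `F`, a maximum flow of `N \ (F \ {e})` still has
value `C(N)`, so one of its paths `p` passes through `e`, and its other paths form a flow of value
`C(N) - 1` in `N \ p`.
-/

lemma Finite.exists_mem_periodicPts {α : Type*} [Finite α] [Nonempty α] (f : α → α) :
    ∃ x, x ∈ Function.periodicPts f := by
  obtain ⟨i, j, hij, hfij⟩ :=
    Finite.exists_ne_map_eq_of_infinite fun n : ℕ => f^[n] (Classical.arbitrary α)
  wlog hlt : i < j generalizing i j
  · exact this j i hij.symm hfij.symm (by omega)
  refine ⟨f^[i] (Classical.arbitrary α),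
    Function.mk_mem_periodicPts (Nat.sub_pos_of_lt hlt) ?_⟩
  rw [Function.IsPeriodicPt, Function.IsFixedPt, ← Function.iterate_add_apply,
    Nat.sub_add_cancel hlt.le, hfij]

namespace Network

variable {V ε : Type} {N : Network V ε}

section Walk

variable {u v : V} {p : List ε}

lemma IsWalk.map_tail (h : N.IsWalk u v p) : p.map N.tail = u :: (p.map N.head).dropLast := by
  obtain ⟨hne, -, hchain, hfirst, -⟩ := h
  have hpos := List.length_pos_of_ne_nil hne
  refine List.ext_getElem (by simp; omega) fun i h₁ _ => ?_
  cases i with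
  | zero => simpa using hfirst hpos
  | succ i => simpa using (hchain i (by simpa using h₁)).symm

lemma IsWalk.map_head (h : N.IsWalk u v p) : p.map N.head = (p.map N.head).dropLast ++ [v] := by
  obtain ⟨hne, -, -, -, hlast⟩ := h
  conv_lhs => rw [← List.dropLast_append_getLast (l := p.map N.head) (by simpa using hne)]
  simpa [List.getLast_eq_getElem] using hlast (List.length_pos_of_ne_nil hne)

lemma IsWalk.tails_add_eq (h : N.IsWalk u v p) :
    (p.map N.tail : Multiset V) + {v} = (p.map N.head : Multiset V) + {u} := by
  have ht := h.map_tail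
  have hh := h.map_head
  set D := (p.map N.head).dropLast
  rw [ht, hh, ← Multiset.cons_coe, ← Multiset.coe_add, ← Multiset.singleton_add,
    Multiset.coe_singleton]
  abel

lemma tails_add_eq_of_forall_isWalk {ps : List (List ε)} (h : ∀ p ∈ ps, N.IsWalk u v p) :
    (ps.flatten.map N.tail : Multiset V) + ps.length • {v} =
      (ps.flatten.map N.head : Multiset V) + ps.length • {u} := by
  induction ps with
  | nil => simp
  | cons p ps ih =>
    have hp := (h p (by simp)).tails_add_eq
    have hps := ih fun q hq => h q (by simp [hq])
    simp only [List.flatten_cons, List.map_append, ← Multiset.coe_add, List.length_cons,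
      succ_nsmul]
    calc (p.map N.tail : Multiset V) + ps.flatten.map N.tail + (ps.length • {v} + {v})
        = ((p.map N.tail : Multiset V) + {v}) + (ps.flatten.map N.tail + ps.length • {v}) := by
          abel
      _ = ((p.map N.head : Multiset V) + {u}) + (ps.flatten.map N.head + ps.length • {u}) := by
          rw [hp, hps]
      _ = _ := by abel

end Walk

lemma isWalk_map_range {f : ℕ → ε} {m : ℕ} (hm : 0 < m) (hE : ∀ k < m, f k ∈ N.edges)
    (hC : ∀ k, k + 1 < m → N.head (f k) = N.tail (f (k + 1))) :
    N.IsWalk (N.tail (f 0)) (N.head (f (m - 1))) ((List.range m).map f) :=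
  ⟨by simp; omega, by simpa using hE, fun i hi => by simpa using hC i (by simpa using hi),
    fun _ => by simp, fun _ => by simp⟩

lemma exists_isCycle_of_forall_exists_succ {W : Finset ε} (hW : W.Nonempty) (hWE : W ⊆ N.edges)
    (hsucc : ∀ x ∈ W, ∃ y ∈ W, N.tail y = N.head x) : ∃ p, N.IsCycle p := by
  choose! next hnextW hnext using hsucc
  let f : W → W := fun x => ⟨next x, hnextW x x.2⟩
  have : Nonempty W := hW.to_subtype
  obtain ⟨x, hx⟩ := Finite.exists_mem_periodicPts f
  set m := Function.minimalPeriod f x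
  have hm : 0 < m := Function.minimalPeriod_pos_of_mem_periodicPts hx
  let g : ℕ → ε := fun k => (f^[k] x).1
  have hg : ∀ k, N.head (g k) = N.tail (g (k + 1)) := fun k => by
    simp only [g, Function.iterate_succ_apply']
    exact (hnext _ (f^[k] x).2).symm
  have hwalk := isWalk_map_range hm (fun k _ => hWE (f^[k] x).2) fun k _ => hg k
  rw [hg, Nat.sub_add_cancel hm, show g m = g 0 from congrArg Subtype.val
    (Function.iterate_minimalPeriod)] at hwalk
  refine ⟨_, _, hwalk, List.nodup_range.map_on fun i hi j hj hij => ?_⟩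
  exact Function.iterate_injOn_Iio_minimalPeriod (by simpa using hi) (by simpa using hj)
    (Subtype.ext hij)

lemma Acyclic.eq_zero_of_map_tail_eq_map_head (hA : N.Acyclic) {W : Multiset ε}
    (hWE : ∀ x ∈ W, x ∈ N.edges) (hW : W.map N.tail = W.map N.head) : W = 0 := by
  classical
  by_contra hne
  refine (exists_isCycle_of_forall_exists_succ (W := W.toFinset) (by simpa using hne)
    (fun x hx => hWE x (by simpa using hx)) fun x hx => ?_).elim hA
  have : N.head x ∈ W.map N.tail := hW ▸ Multiset.mem_map_of_mem _ (by simpa using hx)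
  simpa using this

variable {fs gs : List (List ε)}

lemma IsFlowList.perm (h : N.IsFlowList fs) (hperm : fs.Perm gs) : N.IsFlowList gs :=
  ⟨fun p hp => h.1 p (hperm.mem_iff.mpr hp),
    h.2.perm hperm fun hpq x hxq hxp => hpq x hxp hxq⟩

lemma IsFlowList.flatten_nodup (h : N.IsFlowList fs) : fs.flatten.Nodup :=
  List.nodup_flatten.mpr
    ⟨fun p hp => (h.1 p hp).2, h.2.imp fun hpq => by intro x hxp hxq; exact hpq x hxp hxq⟩

variable [DecidableEq ε] {F : Finset ε} {e : ε}

@[simp]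
lemma mem_usedEdges {x : ε} : x ∈ usedEdges fs ↔ ∃ p ∈ fs, x ∈ p := by
  simp [usedEdges]

lemma isFlowList_cons_iff {p : List ε} :
    N.IsFlowList (p :: fs) ↔
      N.IsPath p ∧ N.IsFlowList fs ∧ Disjoint p.toFinset (usedEdges fs) := by
  simp only [IsFlowList, List.mem_cons, forall_eq_or_imp, List.pairwise_cons,
    Finset.disjoint_left, List.mem_toFinset, mem_usedEdges]
  grind

lemma IsFlowList.usedEdges_subset (h : N.IsFlowList fs) : usedEdges fs ⊆ N.edges := by
  intro x hx
  obtain ⟨p, hp, hxp⟩ := mem_usedEdges.mp hx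
  exact (h.1 p hp).1.2.1 x hxp

lemma IsFlowList.length_le_card (h : N.IsFlowList fs) : fs.length ≤ N.edges.card :=
  calc fs.length = (fs.map fun _ => 1).sum := by simp
    _ ≤ (fs.map List.length).sum :=
      List.sum_le_sum fun p hp => List.length_pos_of_ne_nil (h.1 p hp).1.1
    _ = (usedEdges fs).card := by
      rw [usedEdges, List.toFinset_card_of_nodup h.flatten_nodup, List.length_flatten]
    _ ≤ N.edges.card := Finset.card_le_card h.usedEdges_subset

lemma isWalk_del_iff {u v : V} {p : List ε} :
    (N.del F).IsWalk u v p ↔ N.IsWalk u v p ∧ ∀ x ∈ p, x ∉ F := by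
  simp only [IsWalk, del, Finset.mem_sdiff, forall_and]
  tauto

lemma isFlowList_del_iff :
    (N.del F).IsFlowList fs ↔ N.IsFlowList fs ∧ Disjoint (usedEdges fs) F := by
  have hs : (N.del F).s = N.s := rfl
  have ht : (N.del F).t = N.t := rfl
  simp only [IsFlowList, IsPath, hs, ht, isWalk_del_iff, Finset.disjoint_left, mem_usedEdges]
  grind

lemma bddAbove_hasFlow : BddAbove {n | N.HasFlow n} :=
  ⟨N.edges.card, by rintro _ ⟨fs, hfs, rfl⟩; exact hfs.length_le_card⟩

lemma IsFlowList.length_le_maxFlow (h : N.IsFlowList fs) : fs.length ≤ N.maxFlow :=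
  le_csSup bddAbove_hasFlow ⟨fs, h, rfl⟩

lemma exists_isFlowList_length_eq_maxFlow : ∃ fs, N.IsFlowList fs ∧ fs.length = N.maxFlow :=
  Nat.sSup_mem (s := {n | N.HasFlow n}) ⟨0, [], ⟨by simp, by simp⟩, rfl⟩ bddAbove_hasFlow

lemma maxFlow_del_anti {F' : Finset ε} (h : F' ⊆ F) :
    (N.del F).maxFlow ≤ (N.del F').maxFlow := by
  obtain ⟨fs, hfs, hlen⟩ := exists_isFlowList_length_eq_maxFlow (N := N.del F)
  rw [isFlowList_del_iff] at hfs
  exact hlen ▸ (isFlowList_del_iff.mpr ⟨hfs.1, hfs.2.mono_right h⟩).length_le_maxFlow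

lemma maxFlow_del_le : (N.del F).maxFlow ≤ N.maxFlow := by
  obtain ⟨fs, hfs, hlen⟩ := exists_isFlowList_length_eq_maxFlow (N := N.del F)
  exact hlen ▸ (isFlowList_del_iff.mp hfs).1.length_le_maxFlow

lemma maxFlow_del_sdiff_usedEdges (hf : N.IsFlowList fs) (hmax : fs.length = N.maxFlow) :
    (N.del (N.edges \ usedEdges fs)).maxFlow = N.maxFlow :=
  maxFlow_del_le.antisymm <| hmax ▸
    (isFlowList_del_iff.mpr ⟨hf, Finset.disjoint_sdiff⟩).length_le_maxFlow

lemma Acyclic.usedEdges_eq_of_subset (hA : N.Acyclic) (hf : N.IsFlowList fs)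
    (hg : N.IsFlowList gs) (hlen : gs.length = fs.length) (hsub : usedEdges gs ⊆ usedEdges fs) :
    usedEdges gs = usedEdges fs := by
  have hle : (gs.flatten : Multiset ε) ≤ fs.flatten :=
    (Multiset.le_iff_subset (Multiset.coe_nodup.mpr hg.flatten_nodup)).mpr fun x hx => by
      simpa [usedEdges] using hsub (by simpa [usedEdges] using hx)
  set W := (fs.flatten : Multiset ε) - gs.flatten
  have hadd : (gs.flatten : Multiset ε) + W = fs.flatten := add_tsub_cancel_of_le hle
  have hmap : ∀ g : ε → V, (fs.flatten.map g : Multiset V) = gs.flatten.map g + W.map g :=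
    fun g => by rw [← Multiset.map_coe, ← Multiset.map_coe, ← Multiset.map_add, hadd]
  -- flow conservation for `fs` and for `gs` cancels, leaving `W` a circulation
  have hbal : W.map N.tail = W.map N.head := by
    have hfbal := tails_add_eq_of_forall_isWalk fun p hp => (hf.1 p hp).1
    have hgbal := tails_add_eq_of_forall_isWalk fun p hp => (hg.1 p hp).1
    rw [hmap, hmap, ← hlen, add_right_comm, hgbal, add_right_comm _ (W.map N.head)] at hfbal
    exact add_left_cancel hfbal
  have hWE : ∀ x ∈ W, x ∈ N.edges := fun x hx =>
    hf.usedEdges_subset <| by simpa [usedEdges] using Multiset.mem_of_le tsub_le_self hx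
  have hW : W = 0 := hA.eq_zero_of_map_tail_eq_map_head hWE hbal
  rw [hW, add_zero, Multiset.coe_eq_coe] at hadd
  exact List.toFinset_eq_of_perm _ _ hadd

lemma Acyclic.maxFlow_del_insert_sdiff_usedEdges_lt (hA : N.Acyclic) (hf : N.IsFlowList fs)
    (hmax : fs.length = N.maxFlow) (he : e ∈ usedEdges fs) :
    (N.del (insert e (N.edges \ usedEdges fs))).maxFlow < N.maxFlow := by
  by_contra! hge
  obtain ⟨gs, hg, hlen⟩ :=
    exists_isFlowList_length_eq_maxFlow (N := N.del (insert e (N.edges \ usedEdges fs)))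
  obtain ⟨hg, hdisj⟩ := isFlowList_del_iff.mp hg
  have hsub : usedEdges gs ⊆ usedEdges fs := fun x hx => by
    by_contra hxf
    exact Finset.disjoint_left.mp hdisj hx
      (Finset.mem_insert_of_mem (Finset.mem_sdiff.mpr ⟨hg.usedEdges_subset hx, hxf⟩))
  have hle : (N.del (insert e (N.edges \ usedEdges fs))).maxFlow ≤ N.maxFlow := maxFlow_del_le
  have heq := hA.usedEdges_eq_of_subset hf hg (by omega) hsub
  exact Finset.disjoint_left.mp hdisj (heq ▸ he) (Finset.mem_insert_self e _)

lemma exists_isCF_mem_of_maxFlow_del_lt (heF : e ∈ F) (hFE : F ⊆ N.edges)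
    (hdec : (N.del F).maxFlow < N.maxFlow) (hkeep : (N.del (F.erase e)).maxFlow = N.maxFlow) :
    ∃ G, N.IsCF G ∧ e ∈ G := by
  set S := F.powerset.filter fun G => e ∈ G ∧ (N.del G).maxFlow < N.maxFlow
  obtain ⟨G, hGS, hGmin⟩ := Finset.exists_min_image S Finset.card
    ⟨F, Finset.mem_filter.mpr ⟨Finset.mem_powerset_self F, heF, hdec⟩⟩
  obtain ⟨hGF, heG, hGdec⟩ : G ⊆ F ∧ e ∈ G ∧ (N.del G).maxFlow < N.maxFlow := by
    simpa [S] using hGS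
  refine ⟨G, ⟨⟨e, heG⟩, hGF.trans hFE, hGdec, fun F' hF' => ?_⟩, heG⟩
  by_cases heF' : e ∈ F'
  · by_contra hne
    have hF'S : F' ∈ S := Finset.mem_filter.mpr
      ⟨Finset.mem_powerset.mpr (hF'.subset.trans hGF), heF', maxFlow_del_le.lt_of_ne hne⟩
    exact (Finset.card_lt_card hF').not_ge (hGmin F' hF'S)
  · have hsub : F' ⊆ F.erase e := fun x hx =>
      Finset.mem_erase.mpr ⟨fun hxe => heF' (hxe ▸ hx), hGF (hF'.subset hx)⟩
    exact maxFlow_del_le.antisymm (hkeep ▸ maxFlow_del_anti hsub)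

lemma Acyclic.exists_isCF_mem_of_mem_usedEdges (hA : N.Acyclic) (hf : N.IsFlowList fs)
    (hmax : fs.length = N.maxFlow) (he : e ∈ usedEdges fs) : ∃ F, N.IsCF F ∧ e ∈ F := by
  have heK : e ∉ N.edges \ usedEdges fs := fun h => (Finset.mem_sdiff.mp h).2 he
  refine exists_isCF_mem_of_maxFlow_del_lt (Finset.mem_insert_self e _)
    (Finset.insert_subset (hf.usedEdges_subset he) Finset.sdiff_subset)
    (hA.maxFlow_del_insert_sdiff_usedEdges_lt hf hmax he) ?_
  rw [Finset.erase_insert heK, maxFlow_del_sdiff_usedEdges hf hmax]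

lemma IsCF.exists_isPath_mem_maxFlow_le (hF : N.IsCF F) (he : e ∈ F) :
    ∃ p, N.IsPath p ∧ e ∈ p ∧ N.maxFlow ≤ (N.del p.toFinset).maxFlow + 1 := by
  obtain ⟨-, -, hdec, hmin⟩ := hF
  obtain ⟨fs, hfs, hlen⟩ := exists_isFlowList_length_eq_maxFlow (N := N.del (F.erase e))
  rw [hmin _ (Finset.erase_ssubset he)] at hlen
  obtain ⟨hfs, hdisj⟩ := isFlowList_del_iff.mp hfs
  obtain ⟨p, hp, hep⟩ : ∃ p ∈ fs, e ∈ p := by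
    by_contra! hno
    have hdisjF : Disjoint (usedEdges fs) F := Finset.disjoint_left.mpr fun x hx hxF => by
      obtain ⟨q, hq, hxq⟩ := mem_usedEdges.mp hx
      exact Finset.disjoint_left.mp hdisj hx
        (Finset.mem_erase.mpr ⟨fun hxe => hno q hq (hxe ▸ hxq), hxF⟩)
    exact hdec.not_ge (hlen ▸ (isFlowList_del_iff.mpr ⟨hfs, hdisjF⟩).length_le_maxFlow)
  obtain ⟨hpath, hrest, hpdisj⟩ := isFlowList_cons_iff.mp (hfs.perm (List.perm_cons_erase hp))
  have hle := (isFlowList_del_iff.mpr ⟨hrest, hpdisj.symm⟩).length_le_maxFlow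
  rw [List.length_erase_of_mem hp, hlen] at hle
  exact ⟨p, hpath, hep, by omega⟩

end Network

theorem mem_Hset_iff_general {V ε : Type} [DecidableEq ε]
    (N : Network V ε) (hA : N.Acyclic) (e : ε) :
    (∀ F, N.IsCF F → e ∉ F) ↔
      ∀ p, N.IsPath p → e ∈ p →
        (N.del p.toFinset).maxFlow + 2 ≤ N.maxFlow := by
  constructor
  · intro hH p hp hep
    by_contra! hlt
    obtain ⟨gs, hgs, hlen⟩ := exists_isFlowList_length_eq_maxFlow (N := N.del p.toFinset)
    obtain ⟨hgs, hdisj⟩ := isFlowList_del_iff.mp hgs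
    have hfs : N.IsFlowList (p :: gs) := isFlowList_cons_iff.mpr ⟨hp, hgs, hdisj.symm⟩
    have hmax : (p :: gs).length = N.maxFlow :=
      hfs.length_le_maxFlow.antisymm (by simp only [List.length_cons]; omega)
    obtain ⟨F, hF, heF⟩ := hA.exists_isCF_mem_of_mem_usedEdges hfs hmax
      (mem_usedEdges.mpr ⟨p, List.mem_cons_self, hep⟩)
    exact hH F hF heF
  · intro hcut F hF heF
    obtain ⟨p, hp, hep, hle⟩ := hF.exists_isPath_mem_maxFlow_le heF
    have := hcut p hp hep
    omega

/-- In an acyclic network, an edge `e` on some `s`-`t` path belongs to no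
capacity factor iff every `s`-`t` path through `e` satisfies
`C_{N\p}(s,t) ≤ C_N(s,t) − 2`. -/
theorem mem_Hset_iff {V ε : Type} [DecidableEq ε]
    (N : Network V ε) (hA : N.Acyclic) (e : ε) (he : e ∈ N.edges)
    (hpath : ∃ p, N.IsPath p ∧ e ∈ p) :
    (∀ F, N.IsCF F → e ∉ F) ↔
      ∀ p, N.IsPath p → e ∈ p →
        (N.del p.toFinset).maxFlow + 2 ≤ N.maxFlow :=
  mem_Hset_iff_general N hA e
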